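/- For the power law scale factor a(t) = t^α with α > 0, the Fermi radius satisfies ρ_{M_τ} = C_α·τ where C_α = √π·Γ((1+α)/(2α)) / Γ(1/(2α)); i.e. ∫_0^τ t^α/√(τ^{2α} − t^{2α}) dt = τ·√π·Γ((1+α)/(2α))/Γ(1/(2α)). -/

import Mathlib

/-!
Rescaling `t = τ s` removes `τ`, and the substitution `x = s ^ (2α)` turns
`∫₀¹ s^α (1 - s^(2α))^(-1/2) ds` into `(2α)⁻¹ B((1+α)/(2α), 1/2)`. Since
`(1+α)/(2α) + 1/2 = 1/(2α) + 1`, the factor `2α` is absorbed by `Γ(1/(2α) + 1) = Γ(1/(2α))/(2α)`.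
-/

open MeasureTheory Set Real

theorem integral_rpow_mul_one_sub_rpow {p q : ℝ} (hp : 0 < p) (hq : 0 < q) :
    ∫ x in (0:ℝ)..1, x ^ (p - 1) * (1 - x) ^ (q - 1) = Gamma p * Gamma q / Gamma (p + q) := by
  have hbeta : Complex.betaIntegral p q = ↑(∫ x in (0:ℝ)..1, x ^ (p - 1) * (1 - x) ^ (q - 1)) := by
    rw [Complex.betaIntegral, ← intervalIntegral.integral_ofReal]
    refine intervalIntegral.integral_congr fun x hx ↦ ?_
    rw [uIcc_of_le zero_le_one] at hx
    push_cast
    rw [Complex.ofReal_cpow hx.1, Complex.ofReal_cpow (sub_nonneg.2 hx.2)]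
    push_cast
    rfl
  have h := Complex.betaIntegral_eq_Gamma_mul_div p q (by simpa using hp) (by simpa using hq)
  rw [hbeta, ← Complex.ofReal_add, Complex.Gamma_ofReal, Complex.Gamma_ofReal,
    Complex.Gamma_ofReal] at h
  exact_mod_cast h

theorem integral_comp_rpow_Ioo_zero_one {E : Type*} [NormedAddCommGroup E] [NormedSpace ℝ E]
    (g : ℝ → E) {p : ℝ} (hp : 0 < p) :
    ∫ x in Ioo 0 1, (p * x ^ (p - 1)) • g (x ^ p) = ∫ y in Ioo 0 1, g y := by
  have himage : (· ^ p) '' Ioo (0:ℝ) 1 = Ioo 0 1 := by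
    rw [(continuous_rpow_const hp.le).continuousOn.image_Ioo_of_strictMonoOn zero_le_one
      ((strictMonoOn_rpow_Ici_of_exponent_pos hp).mono Icc_subset_Ici_self)]
    simp [zero_rpow hp.ne']
  conv_rhs => rw [← himage]
  rw [integral_image_eq_integral_abs_deriv_smul measurableSet_Ioo
    (fun x hx ↦ (hasDerivAt_rpow_const (Or.inl hx.1.ne')).hasDerivWithinAt)
    ((rpow_left_injOn hp.ne').mono fun x hx ↦ hx.1.le)]
  refine setIntegral_congr_fun measurableSet_Ioo fun x hx ↦ ?_
  rw [abs_of_pos (by have := hx.1; positivity)]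

theorem integral_rpow_mul_one_sub_rpow_rpow {a b c : ℝ} (ha : -1 < a) (hb : 0 < b) (hc : -1 < c) :
    ∫ s in (0:ℝ)..1, s ^ a * (1 - s ^ b) ^ c =
      Gamma ((a + 1) / b) * Gamma (c + 1) / (b * Gamma ((a + 1) / b + (c + 1))) := by
  have hsubst : ∫ y in (0:ℝ)..1, y ^ ((a + 1) / b - 1) * (1 - y) ^ (c + 1 - 1) =
      b * ∫ s in (0:ℝ)..1, s ^ a * (1 - s ^ b) ^ c := by
    simp only [intervalIntegral.integral_of_le zero_le_one, integral_Ioc_eq_integral_Ioo]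
    rw [← integral_comp_rpow_Ioo_zero_one _ hb, ← integral_const_mul]
    refine setIntegral_congr_fun measurableSet_Ioo fun s hs ↦ ?_
    have hpow : s ^ (b - 1) * s ^ (a + 1 - b) = s ^ a := by
      rw [← rpow_add hs.1]; ring_nf
    rw [smul_eq_mul, ← rpow_mul hs.1.le, add_sub_cancel_right, mul_sub, mul_div_cancel₀ _ hb.ne',
      mul_one, ← hpow]
    ring
  rw [integral_rpow_mul_one_sub_rpow (div_pos (by linarith) hb) (by linarith)] at hsubst
  rw [div_mul_eq_div_div_swap, hsubst, mul_div_cancel_left₀ _ hb.ne']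

theorem integral_rpow_div_sqrt_rpow_sub_rpow (α : ℝ) {τ : ℝ} (hτ : 0 < τ) :
    ∫ t in (0:ℝ)..τ, t ^ α / √(τ ^ (2 * α) - t ^ (2 * α)) =
      τ * ∫ s in (0:ℝ)..1, s ^ α / √(1 - s ^ (2 * α)) := by
  have h := intervalIntegral.smul_integral_comp_mul_left
    (fun t ↦ t ^ α / √(τ ^ (2 * α) - t ^ (2 * α))) (a := 0) (b := 1) τ
  rw [mul_zero, mul_one, smul_eq_mul] at h
  rw [← h]
  congr 1
  refine intervalIntegral.integral_congr fun s hs ↦ ?_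
  have hs : 0 ≤ s := by rw [uIcc_of_le zero_le_one] at hs; exact hs.1
  have hτα : τ ^ α ≠ 0 := (rpow_pos_of_pos hτ α).ne'
  have hsqrt : √(τ ^ (2 * α)) = τ ^ α := by
    rw [sqrt_eq_rpow, ← rpow_mul hτ.le]; ring_nf
  rw [mul_rpow hτ.le hs, mul_rpow hτ.le hs, ← mul_one_sub, sqrt_mul (by positivity), hsqrt,
    mul_div_mul_left _ _ hτα]

theorem integral_rpow_div_sqrt_one_sub_rpow {α : ℝ} (hα : 0 < α) :
    ∫ s in (0:ℝ)..1, s ^ α / √(1 - s ^ (2 * α)) =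
      √π * Gamma ((1 + α) / (2 * α)) / Gamma (1 / (2 * α)) := by
  have hintegrand : EqOn (fun s ↦ s ^ α / √(1 - s ^ (2 * α)))
      (fun s ↦ s ^ α * (1 - s ^ (2 * α)) ^ (-(1 / 2) : ℝ)) (uIcc 0 1) := fun s hs ↦ by
    rw [uIcc_of_le zero_le_one] at hs
    dsimp only
    rw [rpow_neg (sub_nonneg.2 (rpow_le_one hs.1 hs.2 (by positivity))), ← sqrt_eq_rpow,
      div_eq_mul_inv]
  have h2α : 1 / (2 * α) ≠ 0 := by positivity
  rw [intervalIntegral.integral_congr hintegrand,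
    integral_rpow_mul_one_sub_rpow_rpow (by linarith) (by positivity) (by norm_num),
    show (α + 1) / (2 * α) + (-(1 / 2) + 1) = 1 / (2 * α) + 1 by field_simp; ring,
    Gamma_add_one h2α, show -(1 / 2) + 1 = (1 / 2 : ℝ) by norm_num, Gamma_one_half_eq,
    add_comm α 1]
  field_simp

/-- For the power law scale factor `a t = t ^ α`, the Fermi radius is
`ρ_{M_τ} = C_α · τ` with `C_α = √π · Γ((1+α)/(2α)) / Γ(1/(2α))`. -/
theorem power_law_fermi_radius (α : ℝ) (hα : 0 < α) (τ : ℝ) (hτ : 0 < τ) :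
    (∫ t in (0:ℝ)..τ, t ^ α / Real.sqrt (τ ^ (2 * α) - t ^ (2 * α))) =
      τ * Real.sqrt Real.pi * Real.Gamma ((1 + α) / (2 * α)) /
        Real.Gamma (1 / (2 * α)) := by
  rw [integral_rpow_div_sqrt_rpow_sub_rpow α hτ, integral_rpow_div_sqrt_one_sub_rpow hα]
  ring
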